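/- arXiv:1807.01741 — 4 statements merged into one kernel-verified Lean document; each statement's English description precedes it below -/
import Mathlib

section
/- Let (Ω, ℱ, μ) be a probability space, let V be a real Hilbert space, and let A : Ω → (V →L[ℝ] V) be a strongly measurable map into the continuous linear endomorphisms of V. Assume there is γ > 0 such that ⟪A(ω)v, v⟫ ≥ γ‖v‖² for every ω ∈ Ω and v ∈ V. Then: (i) for every ω, A(ω) is bijective; (ii) for every f ∈ V, the function u : Ω → V defined by u(ω) = A(ω)⁻¹ f is strongly measurable; (iii) ‖u(ω)‖ ≤ γ⁻¹ ‖f‖ for every ω; and consequently (iv) (∫_Ω ‖u(ω)‖² dμ(ω))^{1/2} ≤ γ⁻¹ ‖f‖. -/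
open MeasureTheory
open scoped RealInnerProductSpace

section Aux

variable {V : Type*} [NormedAddCommGroup V] [InnerProductSpace ℝ V] [CompleteSpace V]

/-- Coercivity of the associated bilinear form. -/
lemma aux_isCoercive (T : V →L[ℝ] V) (γ : ℝ) (hγ : 0 < γ)
    (h : ∀ v : V, γ * ‖v‖ ^ 2 ≤ ⟪T v, v⟫) :
    IsCoercive ((innerSL ℝ).comp T) := by
  refine ⟨γ, hγ, fun v => ?_⟩
  have := h v
  simp only [ContinuousLinearMap.comp_apply, innerSL_apply_apply]
  nlinarith [h v, sq_nonneg ‖v‖]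

lemma aux_equiv_eq (T : V →L[ℝ] V) (γ : ℝ) (hγ : 0 < γ)
    (h : ∀ v : V, γ * ‖v‖ ^ 2 ≤ ⟪T v, v⟫) (v : V) :
    (aux_isCoercive T γ hγ h).continuousLinearEquivOfBilin v = T v := by
  apply ext_inner_right ℝ
  intro w
  rw [(aux_isCoercive T γ hγ h).continuousLinearEquivOfBilin_apply]
  simp

/-- One-step contraction estimate for the Richardson iteration. -/
lemma aux_step (T : V →L[ℝ] V) (γ τ : ℝ) (hτ : 0 ≤ τ)
    (h : ∀ v : V, γ * ‖v‖ ^ 2 ≤ ⟪T v, v⟫) (e : V) :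
    ‖e - τ • T e‖ ^ 2 ≤ (1 - 2 * τ * γ + τ ^ 2 * ‖T‖ ^ 2) * ‖e‖ ^ 2 := by
  have hexp : ‖e - τ • T e‖ ^ 2 = ‖e‖ ^ 2 - 2 * ⟪e, τ • T e⟫ + ‖τ • T e‖ ^ 2 :=
    norm_sub_sq_real e (τ • T e)
  have h1 : ⟪e, τ • T e⟫ = τ * ⟪T e, e⟫ := by
    rw [real_inner_smul_right, real_inner_comm]
  have h2 : ‖τ • T e‖ ^ 2 = τ ^ 2 * ‖T e‖ ^ 2 := by
    rw [norm_smul, mul_pow, Real.norm_eq_abs, sq_abs]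
  have h3 : ‖T e‖ ≤ ‖T‖ * ‖e‖ := T.le_opNorm e
  have h4 : γ * ‖e‖ ^ 2 ≤ ⟪T e, e⟫ := h e
  have h5 := mul_le_mul_of_nonneg_left h4 hτ
  have h6 : ‖T e‖ ^ 2 ≤ (‖T‖ * ‖e‖) ^ 2 := by
    apply pow_le_pow_left₀ (norm_nonneg _) h3
  have h7 := mul_le_mul_of_nonneg_left h6 (sq_nonneg τ)
  rw [hexp, h1, h2]
  nlinarith [h5, h7]

end Aux

/-- Well-posedness of the random elliptic problem: for a strongly measurable family of
uniformly coercive operators `A(ω)` on a real Hilbert space, each `A(ω)` is bijective,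
the random solution `u(ω) = A(ω)⁻¹ f` is strongly measurable, satisfies
`‖u(ω)‖ ≤ γ⁻¹‖f‖` for every `ω`, and `(∫ ‖u(ω)‖² dμ)^{1/2} ≤ γ⁻¹‖f‖`. -/
theorem random_elliptic_wellposed
    {Ω : Type*} [MeasurableSpace Ω] (μ : Measure Ω) [IsProbabilityMeasure μ]
    {V : Type*} [NormedAddCommGroup V] [InnerProductSpace ℝ V] [CompleteSpace V]
    (A : Ω → V →L[ℝ] V) (hA : StronglyMeasurable A)
    (γ : ℝ) (hγ : 0 < γ)
    (hcoer : ∀ ω (v : V), γ * ‖v‖ ^ 2 ≤ ⟪A ω v, v⟫) :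
    (∀ ω, Function.Bijective (A ω)) ∧
    ∀ f : V, ∃ u : Ω → V,
      (∀ ω, A ω (u ω) = f) ∧
      StronglyMeasurable u ∧
      (∀ ω, ‖u ω‖ ≤ γ⁻¹ * ‖f‖) ∧
      Real.sqrt (∫ ω, ‖u ω‖ ^ 2 ∂μ) ≤ γ⁻¹ * ‖f‖ := by
  have hbij : ∀ ω, Function.Bijective (A ω) := by
    intro ω
    have h := (aux_isCoercive (A ω) γ hγ (hcoer ω)).continuousLinearEquivOfBilin.bijective
    have he : ∀ v, (aux_isCoercive (A ω) γ hγ (hcoer ω)).continuousLinearEquivOfBilin v = A ω v :=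
      aux_equiv_eq (A ω) γ hγ (hcoer ω)
    have hfe : ⇑(A ω) = ⇑(aux_isCoercive (A ω) γ hγ (hcoer ω)).continuousLinearEquivOfBilin :=
      (funext he).symm
    rw [hfe]
    exact h
  refine ⟨hbij, fun f => ?_⟩
  -- the solution
  let u : Ω → V := fun ω =>
    ((aux_isCoercive (A ω) γ hγ (hcoer ω)).continuousLinearEquivOfBilin).symm f
  have hAu : ∀ ω, A ω (u ω) = f := by
    intro ω
    have := aux_equiv_eq (A ω) γ hγ (hcoer ω) (u ω)
    rw [← this]
    exact ((aux_isCoercive (A ω) γ hγ (hcoer ω)).continuousLinearEquivOfBilin).apply_symm_apply f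
  -- pointwise bound
  have hbound : ∀ ω, ‖u ω‖ ≤ γ⁻¹ * ‖f‖ := by
    intro ω
    have h1 : γ * ‖u ω‖ ^ 2 ≤ ⟪A ω (u ω), u ω⟫ := hcoer ω (u ω)
    rw [hAu ω] at h1
    have h2 : ⟪f, u ω⟫ ≤ ‖f‖ * ‖u ω‖ := real_inner_le_norm f (u ω)
    rcases eq_or_lt_of_le (norm_nonneg (u ω)) with h0 | h0
    · rw [← h0]; positivity
    · rw [inv_mul_eq_div, le_div_iff₀ hγ]
      nlinarith
  -- strong measurability via Richardson iteration
  have hmeas : StronglyMeasurable u := by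
    set τ : Ω → ℝ := fun ω => γ / (‖A ω‖ ^ 2 + 1) with hτdef
    have hτmeas : StronglyMeasurable τ := by
      borelize ℝ
      exact (measurable_const.div
        ((hA.norm.measurable.pow_const 2).add_const 1)).stronglyMeasurable
    -- iteration
    let v : ℕ → Ω → V := fun n => Nat.rec (fun _ => 0)
      (fun _ vn ω => vn ω - τ ω • (A ω (vn ω) - f)) n
    have hvmeas : ∀ n, StronglyMeasurable (v n) := by
      intro n
      induction n with
      | zero => exact stronglyMeasurable_const
      | succ n ih =>
        have happ : StronglyMeasurable (fun ω => A ω (v n ω)) :=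
          isBoundedBilinearMap_apply.continuous.comp_stronglyMeasurable (hA.prodMk ih)
        exact ih.sub (hτmeas.smul (happ.sub stronglyMeasurable_const))
    have hconv : Filter.Tendsto v Filter.atTop (nhds u) := by
      rw [tendsto_pi_nhds]
      intro ω
      set M : ℝ := ‖A ω‖ with hM
      have hτpos : 0 ≤ τ ω := le_of_lt (div_pos hγ (by positivity))
      set q : ℝ := max (1 - 2 * τ ω * γ + τ ω ^ 2 * M ^ 2) 0 with hq
      have hq0 : 0 ≤ q := le_max_right _ _
      have hq1 : q < 1 := by
        apply max_lt _ one_pos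
        have hτω : τ ω = γ / (M ^ 2 + 1) := rfl
        have hpos : (0:ℝ) < M ^ 2 + 1 := by positivity
        have hτgt : 0 < τ ω := div_pos hγ hpos
        have hτle : τ ω * M ^ 2 ≤ γ := by
          rw [hτω, div_mul_eq_mul_div, div_le_iff₀ hpos]
          nlinarith [sq_nonneg M]
        nlinarith [mul_pos hτgt hγ, mul_le_mul_of_nonneg_left hτle (le_of_lt hτgt), sq_nonneg (τ ω)]
      -- error recursion
      have hrec : ∀ n, ‖v (n+1) ω - u ω‖ ^ 2 ≤ q * ‖v n ω - u ω‖ ^ 2 := by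
        intro n
        have hstep : v (n+1) ω - u ω = (v n ω - u ω) - τ ω • (A ω (v n ω - u ω)) := by
          show v n ω - τ ω • (A ω (v n ω) - f) - u ω = _
          rw [map_sub, hAu ω]
          abel
        rw [hstep]
        calc ‖(v n ω - u ω) - τ ω • (A ω (v n ω - u ω))‖ ^ 2
            ≤ (1 - 2 * τ ω * γ + τ ω ^ 2 * M ^ 2) * ‖v n ω - u ω‖ ^ 2 :=
              aux_step (A ω) γ (τ ω) hτpos (hcoer ω) _
          _ ≤ q * ‖v n ω - u ω‖ ^ 2 := by
              apply mul_le_mul_of_nonneg_right (le_max_left _ _) (sq_nonneg _)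
      have hgeo : ∀ n, ‖v n ω - u ω‖ ^ 2 ≤ q ^ n * ‖u ω‖ ^ 2 := by
        intro n
        induction n with
        | zero => simp [v]
        | succ n ih =>
          calc ‖v (n+1) ω - u ω‖ ^ 2 ≤ q * ‖v n ω - u ω‖ ^ 2 := hrec n
            _ ≤ q * (q ^ n * ‖u ω‖ ^ 2) := mul_le_mul_of_nonneg_left ih hq0
            _ = q ^ (n+1) * ‖u ω‖ ^ 2 := by ring
      have hsq0 : Filter.Tendsto (fun n => ‖v n ω - u ω‖ ^ 2) Filter.atTop (nhds 0) := by
        apply squeeze_zero (fun n => sq_nonneg _) hgeo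
        have := (tendsto_pow_atTop_nhds_zero_of_lt_one hq0 hq1).mul_const (‖u ω‖ ^ 2)
        simpa using this
      have hn0 : Filter.Tendsto (fun n => ‖v n ω - u ω‖) Filter.atTop (nhds 0) := by
        have h' := (Real.continuous_sqrt.tendsto 0).comp hsq0
        rw [Real.sqrt_zero] at h'
        exact h'.congr fun n => by simp [Function.comp, Real.sqrt_sq_eq_abs]
      rw [tendsto_iff_norm_sub_tendsto_zero]
      exact hn0
    exact stronglyMeasurable_of_tendsto _ hvmeas hconv
  refine ⟨u, hAu, hmeas, hbound, ?_⟩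
  -- integral bound
  have hc : 0 ≤ γ⁻¹ * ‖f‖ := by positivity
  have hsqle : ∀ ω, ‖u ω‖ ^ 2 ≤ (γ⁻¹ * ‖f‖) ^ 2 := fun ω =>
    pow_le_pow_left₀ (norm_nonneg _) (hbound ω) 2
  have hint : Integrable (fun ω => ‖u ω‖ ^ 2) μ := by
    have hg : StronglyMeasurable (fun ω => ‖u ω‖ ^ 2) := by
      borelize ℝ
      exact (hmeas.norm.measurable.pow_const 2).stronglyMeasurable
    refine ⟨hg.aestronglyMeasurable, ?_⟩
    apply HasFiniteIntegral.of_bounded (C := (γ⁻¹ * ‖f‖) ^ 2)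
    filter_upwards with ω
    rw [Real.norm_eq_abs, abs_of_nonneg (sq_nonneg _)]
    exact hsqle ω
  have hIle : ∫ ω, ‖u ω‖ ^ 2 ∂μ ≤ (γ⁻¹ * ‖f‖) ^ 2 := by
    calc ∫ ω, ‖u ω‖ ^ 2 ∂μ ≤ ∫ _, (γ⁻¹ * ‖f‖) ^ 2 ∂μ :=
          integral_mono hint (integrable_const _) hsqle
      _ = (γ⁻¹ * ‖f‖) ^ 2 := by simp
  calc Real.sqrt (∫ ω, ‖u ω‖ ^ 2 ∂μ) ≤ Real.sqrt ((γ⁻¹ * ‖f‖) ^ 2) := Real.sqrt_le_sqrt hIle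
    _ = γ⁻¹ * ‖f‖ := Real.sqrt_sq hc
end

section
/- Let N be a positive integer, let d : Fin N × Fin N → ℝ be symmetric, nonnegative, and satisfy the triangle inequality, and let S be a real symmetric N×N matrix all of whose eigenvalues lie in [a, b] with 0 < a ≤ b; set κ := b/a. Assume S has bandwidth β ≥ 0 with respect to d, i.e., S_{ij} = 0 whenever d(i,j) > β. Then S is invertible, and for every natural number k ≥ 1 there exists a real N×N matrix R such that R_{ij} = 0 whenever d(i,j) > k·β, and ‖S⁻¹ − R‖₂ ≤ (2/a)·((√κ − 1)/(√κ + 1))^k. -/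
/-!
If `X * q = 1 - p` with `p(0) = 1`, then `S⁻¹ - q(S) = S⁻¹ p(S)`, a function of `S` whose
spectral norm is at most `max_{[a, b]} |p| / a`. For `p` take the Chebyshev polynomial `T_k`
carried from `[-1, 1]` to `[a, b]` and normalised by its value `T_k(σ)` at the image
`σ = (b + a)/(b - a)` of `0`. With `ρ = (√κ - 1)/(√κ + 1)` one has `σ = (ρ + ρ⁻¹)/2`, hence
`T_k(σ) = (ρ^k + ρ^{-k})/2`, so `|p| ≤ 2ρ^k` on `[a, b]`. Finally `q` has degree `< k`, and by the
triangle inequality for `d` the powers `S^m`, `m < k`, have bandwidth `(m + 1)β ≤ kβ`, hence so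
does `R = q(S)`.
-/

noncomputable def l2OpNorm {m n : Type*} [Fintype m] [Fintype n] [DecidableEq n]
    (M : Matrix m n ℝ) : ℝ :=
  ‖LinearMap.toContinuousLinearMap (Matrix.toEuclideanLin M)‖

open Polynomial

namespace Matrix

variable {n R : Type*} [CommSemiring R]

def HasBandwidth (d : n × n → ℝ) (β : ℝ) (M : Matrix n n R) : Prop :=
  ∀ i j, β < d (i, j) → M i j = 0

variable {d : n × n → ℝ} {α β : ℝ} {A B : Matrix n n R}

theorem HasBandwidth.mono (h : A.HasBandwidth d α) (hαβ : α ≤ β) : A.HasBandwidth d β :=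
  fun i j hij => h i j (hαβ.trans_lt hij)

theorem HasBandwidth.mul [Fintype n] (htri : ∀ i j m, d (i, j) ≤ d (i, m) + d (m, j))
    (hA : A.HasBandwidth d α) (hB : B.HasBandwidth d β) : (A * B).HasBandwidth d (α + β) := by
  intro i j hij
  rw [mul_apply]
  refine Finset.sum_eq_zero fun l _ => ?_
  rcases le_or_gt (d (i, l)) α with hil | hil
  · rw [hB l j (by linarith [htri i j l]), mul_zero]
  · rw [hA i l hil, zero_mul]

theorem hasBandwidth_one [DecidableEq n] (h : ∀ i, d (i, i) ≤ β) :
    (1 : Matrix n n R).HasBandwidth d β := by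
  intro i j hij
  exact one_apply_ne fun hij' => (h i).not_gt (hij' ▸ hij)

theorem HasBandwidth.pow [Fintype n] [DecidableEq n]
    (htri : ∀ i j m, d (i, j) ≤ d (i, m) + d (m, j)) (hdiag : ∀ i, d (i, i) ≤ β)
    (hA : A.HasBandwidth d β) (m : ℕ) :
    (A ^ m).HasBandwidth d ((m + 1) * β) := by
  induction m with
  | zero => simpa using hasBandwidth_one hdiag
  | succ m ih =>
    rw [pow_succ]
    convert ih.mul htri hA using 1
    push_cast
    ring

theorem HasBandwidth.aeval [Fintype n] [DecidableEq n]
    (htri : ∀ i j m, d (i, j) ≤ d (i, m) + d (m, j)) (hdiag : ∀ i, d (i, i) ≤ β) (hβ : 0 ≤ β)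
    (hA : A.HasBandwidth d β) {q : R[X]} {k : ℕ} (hq : q.natDegree < k) :
    (Polynomial.aeval A q).HasBandwidth d (k * β) := by
  intro i j hij
  rw [aeval_eq_sum_range' hq, sum_apply]
  refine Finset.sum_eq_zero fun m hm => ?_
  have hmk : ((m : ℝ) + 1) * β ≤ k * β := by
    gcongr
    exact_mod_cast Finset.mem_range.mp hm
  rw [smul_apply, (hA.pow htri hdiag m).mono hmk i j hij, smul_zero]

end Matrix

namespace Polynomial.Chebyshev

theorem T_real_eval_half_add_inv (k : ℕ) {r : ℝ} (hr : 0 < r) :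
    (T ℝ k).eval ((r + r⁻¹) / 2) = (r ^ k + r⁻¹ ^ k) / 2 := by
  rw [← Real.cosh_log hr, T_real_cosh, Int.cast_natCast, ← Real.log_pow,
    Real.cosh_log (pow_pos hr k), inv_pow]

end Polynomial.Chebyshev

noncomputable def chebyshevRate (κ : ℝ) : ℝ := (√κ - 1) / (√κ + 1)

theorem chebyshevRate_pos {κ : ℝ} (hκ : 1 < κ) : 0 < chebyshevRate κ := by
  have : 1 < √κ := by simpa using Real.sqrt_lt_sqrt zero_le_one hκ
  exact div_pos (by linarith) (by linarith)

theorem chebyshevRate_nonneg {κ : ℝ} (hκ : 1 ≤ κ) : 0 ≤ chebyshevRate κ := by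
  have : 1 ≤ √κ := by simpa using Real.sqrt_le_sqrt hκ
  exact div_nonneg (by linarith) (by linarith)

theorem chebyshevRate_add_inv {κ : ℝ} (hκ : 1 < κ) :
    (chebyshevRate κ + (chebyshevRate κ)⁻¹) / 2 = (κ + 1) / (κ - 1) := by
  have hs : 1 < √κ := by simpa using Real.sqrt_lt_sqrt zero_le_one hκ
  have hsq : √κ ^ 2 = κ := Real.sq_sqrt (by linarith)
  have h1 : √κ - 1 ≠ 0 := by linarith
  have h2 : √κ + 1 ≠ 0 := by linarith
  have h3 : √κ ^ 2 - 1 ≠ 0 := by nlinarith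
  conv_rhs => rw [← hsq]
  rw [chebyshevRate]
  field_simp
  ring

theorem exists_residual_poly_of_lt {a b : ℝ} (ha : 0 < a) (hab : a < b) (k : ℕ) :
    ∃ p : ℝ[X], p.natDegree ≤ k ∧ p.eval 0 = 1 ∧
      ∀ x ∈ Set.Icc a b, |p.eval x| ≤ 2 * chebyshevRate (b / a) ^ k := by
  have hκ : 1 < b / a := (one_lt_div ha).mpr hab
  set ρ := chebyshevRate (b / a)
  have hρ : 0 < ρ := chebyshevRate_pos hκ
  set σ := (b + a) / (b - a) with hσ_def
  have hσ : (ρ + ρ⁻¹) / 2 = σ := by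
    rw [chebyshevRate_add_inv hκ, hσ_def]
    field_simp
  set c := (Chebyshev.T ℝ k).eval σ
  have hc : c = (ρ ^ k + ρ⁻¹ ^ k) / 2 := by
    rw [← Chebyshev.T_real_eval_half_add_inv k hρ, hσ]
  have hcpos : 0 < c := by rw [hc]; positivity
  have hc_inv : c⁻¹ ≤ 2 * ρ ^ k := calc
    c⁻¹ ≤ (ρ⁻¹ ^ k / 2)⁻¹ := inv_anti₀ (by positivity) (by rw [hc]; linarith [pow_pos hρ k])
    _ = 2 * ρ ^ k := by rw [inv_div, inv_pow, div_inv_eq_mul]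
  refine ⟨C c⁻¹ * (Chebyshev.T ℝ k).comp (C (-2 / (b - a)) * X + C σ), ?_, ?_, ?_⟩
  · refine natDegree_C_mul_le _ _ |>.trans ?_
    rw [natDegree_comp, Chebyshev.natDegree_T, Int.natAbs_natCast]
    exact (Nat.mul_le_mul_left k natDegree_linear_le).trans_eq (mul_one k)
  · simp [c, hcpos.ne']
  · rintro x ⟨hax, hxb⟩
    have hu : |-2 / (b - a) * x + σ| ≤ 1 := by
      have hba : 0 < b - a := by linarith
      rw [show -2 / (b - a) * x + σ = (b + a - 2 * x) / (b - a) by rw [hσ_def]; field_simp; ring,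
        abs_div, abs_of_pos hba, div_le_one hba, abs_le]
      constructor <;> linarith
    simp only [eval_mul, eval_C, eval_comp, eval_add, eval_X, abs_mul, abs_inv, abs_of_pos hcpos]
    calc c⁻¹ * |(Chebyshev.T ℝ k).eval (-2 / (b - a) * x + σ)| ≤ c⁻¹ * 1 := by
          gcongr; exact Chebyshev.abs_eval_T_real_le_one k hu
      _ ≤ 2 * ρ ^ k := by rwa [mul_one]

theorem exists_residual_poly {a b : ℝ} (ha : 0 < a) (hab : a ≤ b) (k : ℕ) :
    ∃ p : ℝ[X], p.natDegree ≤ k ∧ p.eval 0 = 1 ∧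
      ∀ x ∈ Set.Icc a b, |p.eval x| ≤ 2 * chebyshevRate (b / a) ^ k := by
  rcases hab.lt_or_eq with hab | rfl
  · exact exists_residual_poly_of_lt ha hab k
  refine ⟨(1 - C a⁻¹ * X) ^ k, ?_, by simp, ?_⟩
  · refine natDegree_pow_le.trans ?_
    exact (Nat.mul_le_mul_left k (natDegree_sub_le _ _)).trans_eq (by simp [ha.ne'])
  · rintro x ⟨h1, h2⟩
    obtain rfl := le_antisymm h2 h1
    have : (0 : ℝ) ≤ 0 ^ k := pow_nonneg le_rfl k
    simp [chebyshevRate, ha.ne']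
    linarith

theorem exists_natDegree_lt_abs_one_sub_mul_eval_le {a b : ℝ} (ha : 0 < a) (hab : a ≤ b) {k : ℕ}
    (hk : 0 < k) : ∃ q : ℝ[X], q.natDegree < k ∧
      ∀ x ∈ Set.Icc a b, |1 - x * q.eval x| ≤ 2 * chebyshevRate (b / a) ^ k := by
  obtain ⟨p, hpk, hp0, hp⟩ := exists_residual_poly ha hab k
  obtain ⟨q, hq⟩ : X ∣ 1 - p := X_dvd_iff.mpr (by simp [coeff_zero_eq_eval_zero, hp0])
  refine ⟨q, ?_, fun x hx => ?_⟩
  · rcases eq_or_ne q 0 with rfl | hq0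
    · simpa using hk
    · have := natDegree_sub_le 1 p
      rw [hq, natDegree_X_mul hq0, natDegree_one] at this
      omega
  · have hqx := congrArg (eval x) hq
    simp only [eval_sub, eval_one, eval_mul, eval_X] at hqx
    rw [← hqx, sub_sub_cancel]
    exact hp x hx

namespace Matrix.IsHermitian

open scoped Matrix.Norms.L2Operator

variable {n 𝕜 : Type*} [Fintype n] [DecidableEq n] [RCLike 𝕜] {A : Matrix n n 𝕜}

theorem norm_cfc_le (hA : A.IsHermitian) (f : ℝ → ℝ) {C : ℝ} (hC : 0 ≤ C)
    (hf : ∀ i, |f (hA.eigenvalues i)| ≤ C) : ‖cfc f A‖ ≤ C := by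
  rw [hA.cfc_eq, IsHermitian.cfc, Unitary.conjStarAlgAut_apply, ← Unitary.coe_star,
    CStarRing.norm_mul_coe_unitary, CStarRing.norm_coe_unitary_mul, l2_opNorm_diagonal,
    pi_norm_le_iff_of_nonneg hC]
  simpa using hf

theorem norm_inv_sub_aeval_le (hA : A.IsHermitian) {a ε : ℝ} (ha : 0 < a) (hε : 0 ≤ ε)
    (hAa : ∀ i, a ≤ hA.eigenvalues i) (q : ℝ[X])
    (hq : ∀ i, |1 - hA.eigenvalues i * q.eval (hA.eigenvalues i)| ≤ ε) :
    ‖A⁻¹ - aeval A q‖ ≤ ε / a := by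
  have hpos : ∀ i, 0 < hA.eigenvalues i := fun i => ha.trans_le (hAa i)
  have hspec : ∀ x ∈ spectrum ℝ A, x ≠ 0 := by
    rw [hA.spectrum_real_eq_range_eigenvalues]
    rintro _ ⟨i, rfl⟩
    exact (hpos i).ne'
  have hunit : IsUnit A := (spectrum.zero_notMem_iff ℝ).mp fun h => hspec 0 h rfl
  have hres : A⁻¹ - aeval A q = cfc (fun x => (1 - x * q.eval x) / x) A := by
    rw [nonsing_inv_eq_ringInverse, ← cfc_ringInverse_id (R := ℝ) A hunit, ← cfc_polynomial q A,
      ← cfc_sub (fun x => x⁻¹) (fun x => q.eval x) A (continuousOn_inv₀.mono hspec)]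
    refine cfc_congr fun x hx => ?_
    field_simp [hspec x hx]
  rw [hres]
  refine hA.norm_cfc_le _ (div_nonneg hε ha.le) fun i => ?_
  rw [abs_div, abs_of_pos (hpos i)]
  exact div_le_div₀ hε (hq i) ha (hAa i)

end Matrix.IsHermitian

open scoped Matrix.Norms.L2Operator in
theorem l2OpNorm_eq_norm {n : Type*} [Fintype n] [DecidableEq n] (M : Matrix n n ℝ) :
    l2OpNorm M = ‖M‖ := rfl

theorem banded_approximate_inverse_general
    {N : ℕ} (d : Fin N × Fin N → ℝ)
    (htri : ∀ i j m, d (i, j) ≤ d (i, m) + d (m, j))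
    (S : Matrix (Fin N) (Fin N) ℝ) (hS : S.IsHermitian)
    (a b : ℝ) (ha : 0 < a) (hab : a ≤ b)
    (heig : ∀ i, hS.eigenvalues i ∈ Set.Icc a b)
    (β : ℝ) (hβ : 0 ≤ β) (hband : ∀ i j, β < d (i, j) → S i j = 0) :
    IsUnit S ∧
    ∀ k : ℕ, 1 ≤ k → ∃ R : Matrix (Fin N) (Fin N) ℝ,
      (∀ i j, (k : ℝ) * β < d (i, j) → R i j = 0) ∧
      l2OpNorm (S⁻¹ - R) ≤
        (2 / a) * ((Real.sqrt (b / a) - 1) / (Real.sqrt (b / a) + 1)) ^ k := by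
  have hpos : S.PosDef := hS.posDef_iff_eigenvalues_pos.mpr fun i => ha.trans_le (heig i).1
  refine ⟨hpos.isUnit, fun k hk => ?_⟩
  -- `d` need not vanish on the diagonal; the positive diagonal of `S` bounds it by `β`.
  have hdiag : ∀ i, d (i, i) ≤ β := fun i => not_lt.mp fun h => hpos.diag_pos.ne' (hband i i h)
  obtain ⟨q, hqk, hq⟩ := exists_natDegree_lt_abs_one_sub_mul_eval_le ha hab hk
  refine ⟨aeval S q, Matrix.HasBandwidth.aeval htri hdiag hβ hband hqk, ?_⟩
  have hρ := chebyshevRate_nonneg ((one_le_div ha).mpr hab)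
  rw [l2OpNorm_eq_norm, ← mul_div_right_comm]
  exact hS.norm_inv_sub_aeval_le ha (by positivity) (fun i => (heig i).1) q
    fun i => hq _ (heig i)

/-- Banded approximate inverse: if `S` is real symmetric with all eigenvalues in `[a, b]`,
`0 < a ≤ b`, `κ = b/a`, and `S` has bandwidth `β` with respect to a semi-metric `d`, then
`S` is invertible and for every `k ≥ 1` there is a matrix `R` of bandwidth `k·β` with
`‖S⁻¹ - R‖₂ ≤ (2/a)((√κ - 1)/(√κ + 1))^k`. -/
theorem banded_approximate_inverse
    {N : ℕ} (hN : 0 < N) (d : Fin N × Fin N → ℝ)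
    (hsym : ∀ i j, d (i, j) = d (j, i))
    (hnonneg : ∀ i j, 0 ≤ d (i, j))
    (htri : ∀ i j m, d (i, j) ≤ d (i, m) + d (m, j))
    (S : Matrix (Fin N) (Fin N) ℝ) (hS : S.IsHermitian)
    (a b : ℝ) (ha : 0 < a) (hab : a ≤ b)
    (heig : ∀ i, hS.eigenvalues i ∈ Set.Icc a b)
    (β : ℝ) (hβ : 0 ≤ β) (hband : ∀ i j, β < d (i, j) → S i j = 0) :
    IsUnit S ∧
    ∀ k : ℕ, 1 ≤ k → ∃ R : Matrix (Fin N) (Fin N) ℝ,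
      (∀ i j, (k : ℝ) * β < d (i, j) → R i j = 0) ∧
      l2OpNorm (S⁻¹ - R) ≤
        (2 / a) * ((Real.sqrt (b / a) - 1) / (Real.sqrt (b / a) + 1)) ^ k :=
  banded_approximate_inverse_general d htri S hS a b ha hab heig β hβ hband
end

section
/- Let V be a real Hilbert space, let N be a positive integer, and let u_1, …, u_N and v_1, …, v_N be vectors in V. Assume there are constants C > 0 and ε ≥ 0 such that for all α ∈ ℝ^N: ‖∑_{i=1}^N α_i u_i‖² ≤ C‖α‖², ‖∑_{i=1}^N α_i v_i‖² ≤ C‖α‖², and ‖∑_{i=1}^N α_i (u_i − v_i)‖² ≤ ε²‖α‖². Let G_u and G_v be the Gram matrices (G_u)_{ij} = ⟪u_i, u_j⟫ and (G_v)_{ij} = ⟪v_i, v_j⟫. Then ‖G_u − G_v‖₂ ≤ 2·ε·√C. -/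
open scoped RealInnerProductSpace

/-! With the synthesis maps `S_u α = ∑ αᵢ uᵢ` and `S_v`, the bilinear form of `G_u - G_v` is
`⟪S_u α, S_u β⟫ - ⟪S_v α, S_v β⟫ = ⟪(S_u - S_v) α, S_u β⟫ + ⟪S_v α, (S_u - S_v) β⟫`,
and each term is at most `ε √C ‖α‖ ‖β‖` by Cauchy–Schwarz. -/

section

variable {V : Type*} [NormedAddCommGroup V] [InnerProductSpace ℝ V]

theorem real_inner_sub_real_inner_le (a b c d : V) :
    ⟪a, b⟫ - ⟪c, d⟫ ≤ ‖a - c‖ * ‖b‖ + ‖c‖ * ‖b - d‖ := by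
  have hsplit : ⟪a, b⟫ - ⟪c, d⟫ = ⟪a - c, b⟫ + ⟪c, b - d⟫ := by
    rw [inner_sub_left, inner_sub_right]; ring
  rw [hsplit]
  exact add_le_add (real_inner_le_norm _ _) (real_inner_le_norm _ _)

variable {ι : Type*} [Fintype ι]

theorem Matrix.real_inner_toEuclideanLin_gram [DecidableEq ι] (u : ι → V)
    (x y : EuclideanSpace ℝ ι) :
    ⟪x, Matrix.toEuclideanLin (Matrix.gram ℝ u) y⟫ = ⟪∑ i, x i • u i, ∑ i, y i • u i⟫ := by
  rw [← Matrix.star_dotProduct_gram_mulVec, EuclideanSpace.inner_eq_star_dotProduct]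
  simp [dotProduct_comm]

theorem norm_sum_smul_le_sqrt_mul_norm {u : ι → V} {K : ℝ}
    (h : ∀ α : ι → ℝ, ‖∑ i, α i • u i‖ ^ 2 ≤ K * ∑ i, α i ^ 2) (x : EuclideanSpace ℝ ι) :
    ‖∑ i, x i • u i‖ ≤ √K * ‖x‖ := by
  have hsq := Real.sqrt_le_sqrt (h x)
  rwa [← EuclideanSpace.real_norm_sq_eq, Real.sqrt_mul' _ (sq_nonneg _),
    Real.sqrt_sq (norm_nonneg _), Real.sqrt_sq (norm_nonneg _)] at hsq

end

theorem gram_matrix_perturbation_general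
    {V : Type*} [NormedAddCommGroup V] [InnerProductSpace ℝ V]
    {N : ℕ} (u v : Fin N → V) (C ε : ℝ) (hε : 0 ≤ ε)
    (hu : ∀ α : Fin N → ℝ, ‖∑ i, α i • u i‖ ^ 2 ≤ C * ∑ i, α i ^ 2)
    (hv : ∀ α : Fin N → ℝ, ‖∑ i, α i • v i‖ ^ 2 ≤ C * ∑ i, α i ^ 2)
    (hdiff : ∀ α : Fin N → ℝ, ‖∑ i, α i • (u i - v i)‖ ^ 2 ≤ ε ^ 2 * ∑ i, α i ^ 2)
    (Gu Gv : Matrix (Fin N) (Fin N) ℝ)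
    (hGu : ∀ i j, Gu i j = ⟪u i, u j⟫) (hGv : ∀ i j, Gv i j = ⟪v i, v j⟫) :
    l2OpNorm (Gu - Gv) ≤ 2 * ε * Real.sqrt C := by
  obtain rfl : Gu = Matrix.gram ℝ u := Matrix.ext hGu
  obtain rfl : Gv = Matrix.gram ℝ v := Matrix.ext hGv
  have hsynth_diff (x : EuclideanSpace ℝ (Fin N)) :
      ‖∑ i, x i • u i - ∑ i, x i • v i‖ ≤ ε * ‖x‖ := by
    simpa [Real.sqrt_sq hε, smul_sub, Finset.sum_sub_distrib] using
      norm_sum_smul_le_sqrt_mul_norm hdiff x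
  refine ContinuousLinearMap.opNorm_le_of_re_inner_le (by positivity) fun x y hx hy => ?_
  rw [RCLike.re_to_real, LinearMap.coe_toContinuousLinearMap', map_sub, LinearMap.sub_apply,
    inner_sub_left, real_inner_comm y, real_inner_comm y, Matrix.real_inner_toEuclideanLin_gram,
    Matrix.real_inner_toEuclideanLin_gram]
  calc _ ≤ ‖∑ i, y i • u i - ∑ i, y i • v i‖ * ‖∑ i, x i • u i‖
        + ‖∑ i, y i • v i‖ * ‖∑ i, x i • u i - ∑ i, x i • v i‖ :=
        real_inner_sub_real_inner_le _ _ _ _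
    _ ≤ (ε * ‖y‖) * (√C * ‖x‖) + (√C * ‖y‖) * (ε * ‖x‖) := by
        gcongr
        exacts [hsynth_diff y, norm_sum_smul_le_sqrt_mul_norm hu x,
          norm_sum_smul_le_sqrt_mul_norm hv y, hsynth_diff x]
    _ = 2 * ε * √C := by rw [hx, hy]; ring

/-- Gram-matrix perturbation: if the synthesis operators of `(u_i)` and `(v_i)` are bounded
by `√C` and the synthesis operator of the difference is bounded by `ε`, then the Gram
matrices differ by at most `2ε√C` in spectral norm. -/
theorem gram_matrix_perturbation
    {V : Type*} [NormedAddCommGroup V] [InnerProductSpace ℝ V]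
    {N : ℕ} (hN : 0 < N) (u v : Fin N → V) (C ε : ℝ) (hC : 0 < C) (hε : 0 ≤ ε)
    (hu : ∀ α : Fin N → ℝ, ‖∑ i, α i • u i‖ ^ 2 ≤ C * ∑ i, α i ^ 2)
    (hv : ∀ α : Fin N → ℝ, ‖∑ i, α i • v i‖ ^ 2 ≤ C * ∑ i, α i ^ 2)
    (hdiff : ∀ α : Fin N → ℝ, ‖∑ i, α i • (u i - v i)‖ ^ 2 ≤ ε ^ 2 * ∑ i, α i ^ 2)
    (Gu Gv : Matrix (Fin N) (Fin N) ℝ)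
    (hGu : ∀ i j, Gu i j = ⟪u i, u j⟫) (hGv : ∀ i j, Gv i j = ⟪v i, v j⟫) :
    l2OpNorm (Gu - Gv) ≤ 2 * ε * Real.sqrt C :=
  gram_matrix_perturbation_general u v C ε hε hu hv hdiff Gu Gv hGu hGv
end

section
/- Let (Ω, ℱ) be a measurable space, let V be a real Hilbert space, and let A : Ω → (V →L[ℝ] V) be a strongly measurable map. Assume there are constants 0 < γ ≤ Γ such that for every ω ∈ Ω: ⟪A(ω)v, v⟫ ≥ γ‖v‖² for all v ∈ V, and ‖A(ω)‖ ≤ Γ. Let W be a closed subspace of V and fix u ∈ V. Then for every ω there is a unique element C(ω)u ∈ W satisfying ⟪A(ω)·(C(ω)u), w⟫ = ⟪A(ω)u, w⟫ for all w ∈ W; moreover ‖C(ω)u‖ ≤ (Γ/γ)·‖u‖ for every ω, and the map ω ↦ C(ω)u is strongly measurable. -/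
open MeasureTheory
open scoped RealInnerProductSpace

/-!
Compressing `A(ω)` to `W` gives a coercive operator on the Hilbert space `W`, which is
invertible by Lax–Milgram; `C(ω)u` is its inverse applied to the projection of `A(ω)u` onto `W`.
Inversion is continuous on the open set of units, so `ω ↦ C(ω)u` is a function of `A(ω)` that is
continuous at every value of `A`, hence strongly measurable.
-/

theorem MeasureTheory.StronglyMeasurable.comp_of_continuousAt {α β δ : Type*} [MeasurableSpace α]
    [TopologicalSpace β] [TopologicalSpace δ] {f : α → β} {g : β → δ}
    (hf : StronglyMeasurable f) (hg : ∀ a, ContinuousAt g (f a)) :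
    StronglyMeasurable (g ∘ f) :=
  ⟨fun n => (hf.approx n).map g, fun a => (hg a).tendsto.comp (hf.tendsto_approx a)⟩

theorem ContinuousLinearMap.isUnit_of_isCoercive_innerSL_comp {E : Type*}
    [NormedAddCommGroup E] [InnerProductSpace ℝ E] [CompleteSpace E] {S : E →L[ℝ] E}
    (hS : IsCoercive ((innerSL ℝ).comp S)) : IsUnit S :=
  ⟨hS.continuousLinearEquivOfBilin.toUnit,
    ContinuousLinearMap.ext fun x =>
      ext_inner_right ℝ fun w => hS.continuousLinearEquivOfBilin_apply x w⟩

namespace Submodule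

variable {V : Type*} [NormedAddCommGroup V] [InnerProductSpace ℝ V] (W : Submodule ℝ V)

section Galerkin

variable {T : V →L[ℝ] V} {γ : ℝ} {u c c' : V}

theorem eq_of_inner_apply_eq (hγ : 0 < γ) (hcoer : ∀ v, γ * ‖v‖ ^ 2 ≤ ⟪T v, v⟫)
    (hc : c ∈ W) (hc' : c' ∈ W) (h : ∀ w ∈ W, ⟪T c, w⟫ = ⟪T c', w⟫) : c = c' := by
  have hzero : ⟪T (c - c'), c - c'⟫ = 0 := by
    rw [map_sub, inner_sub_left, h _ (W.sub_mem hc hc'), sub_self]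
  have hnorm : ‖c - c'‖ ^ 2 ≤ 0 := by
    have := hcoer (c - c')
    rw [hzero] at this
    exact nonpos_of_mul_nonpos_right this hγ
  rw [← sub_eq_zero, ← norm_eq_zero]
  exact pow_eq_zero_iff two_ne_zero |>.mp (le_antisymm hnorm (sq_nonneg _))

theorem norm_le_of_inner_apply_eq (hγ : 0 < γ) (hcoer : ∀ v, γ * ‖v‖ ^ 2 ≤ ⟪T v, v⟫)
    (hc : c ∈ W) (h : ∀ w ∈ W, ⟪T c, w⟫ = ⟪T u, w⟫) : ‖c‖ ≤ ‖T‖ / γ * ‖u‖ := by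
  have hsq : γ * ‖c‖ * ‖c‖ ≤ ‖T‖ * ‖u‖ * ‖c‖ :=
    calc γ * ‖c‖ * ‖c‖ = γ * ‖c‖ ^ 2 := by ring
      _ ≤ ⟪T c, c⟫ := hcoer c
      _ = ⟪T u, c⟫ := h c hc
      _ ≤ ‖T u‖ * ‖c‖ := real_inner_le_norm _ _
      _ ≤ ‖T‖ * ‖u‖ * ‖c‖ := by gcongr; exact T.le_opNorm u
  have hγc : γ * ‖c‖ ≤ ‖T‖ * ‖u‖ := by
    rcases (norm_nonneg c).eq_or_lt with hc0 | hc0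
    · rw [← hc0, mul_zero]; positivity
    · exact le_of_mul_le_mul_right hsq hc0
  rw [div_mul_eq_mul_div, le_div_iff₀ hγ]
  linarith

end Galerkin

variable [W.HasOrthogonalProjection]

/-- The compression `P_W ∘ T ∘ ι_W` of an operator `T` on `V` to the subspace `W`. -/
noncomputable def compression : (V →L[ℝ] V) →L[ℝ] (W →L[ℝ] W) :=
  ContinuousLinearMap.compL ℝ W V W W.orthogonalProjectionOnto ∘L
    (ContinuousLinearMap.compL ℝ W V V).flip W.subtypeL

theorem inner_compression_apply (T : V →L[ℝ] V) (x w : W) :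
    ⟪W.compression T x, w⟫ = ⟪T x, (w : V)⟫ :=
  W.inner_orthogonalProjectionOnto_eq_of_mem_right w (T x)

theorem isCoercive_innerSL_comp_compression {T : V →L[ℝ] V} {γ : ℝ} (hγ : 0 < γ)
    (hcoer : ∀ v, γ * ‖v‖ ^ 2 ≤ ⟪T v, v⟫) :
    IsCoercive ((innerSL ℝ).comp (W.compression T)) := by
  refine ⟨γ, hγ, fun x => ?_⟩
  calc γ * ‖x‖ * ‖x‖ = γ * ‖(x : V)‖ ^ 2 := by rw [norm_coe]; ring
    _ ≤ ⟪T x, (x : V)⟫ := hcoer x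
    _ = (innerSL ℝ).comp (W.compression T) x x := (W.inner_compression_apply T x x).symm

/-- The `T`-orthogonal projection of `u` onto `W`; a junk value unless the compression of `T` is
invertible. -/
noncomputable def corrector (T : V →L[ℝ] V) (u : V) : V :=
  Ring.inverse (W.compression T) (W.orthogonalProjectionOnto (T u))

theorem corrector_mem (T : V →L[ℝ] V) (u : V) : W.corrector T u ∈ W :=
  Subtype.prop _

theorem inner_apply_corrector {T : V →L[ℝ] V} (hT : IsUnit (W.compression T)) (u : V)
    {w : V} (hw : w ∈ W) : ⟪T (W.corrector T u), w⟫ = ⟪T u, w⟫ := by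
  have hsolve :
      W.compression T (Ring.inverse (W.compression T) (W.orthogonalProjectionOnto (T u))) =
        W.orthogonalProjectionOnto (T u) :=
    congrArg (fun L => L (W.orthogonalProjectionOnto (T u))) (Ring.mul_inverse_cancel _ hT)
  simpa only [corrector, inner_compression_apply, inner_orthogonalProjectionOnto_eq_of_mem_right]
    using
    congrArg (fun y : W => ⟪y, (⟨w, hw⟩ : W)⟫) hsolve

theorem continuousAt_corrector [CompleteSpace W] {T : V →L[ℝ] V}
    (hT : IsUnit (W.compression T)) (u : V) :
    ContinuousAt (fun S => W.corrector S u) T := by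
  have hinv : ContinuousAt Ring.inverse (W.compression T) := by
    obtain ⟨e, he⟩ := hT
    rw [← he]
    exact NormedRing.inverse_continuousAt (R := W →L[ℝ] W) e
  have hrhs : Continuous fun S : V →L[ℝ] V => W.orthogonalProjectionOnto (S u) :=
    W.orthogonalProjectionOnto.continuous.comp (ContinuousLinearMap.apply ℝ V u).continuous
  exact W.subtypeL.continuous.continuousAt.comp
    ((hinv.comp W.compression.continuous.continuousAt).clm_apply hrhs.continuousAt)

end Submodule

theorem corrector_measurable_wellposed_general
    {Ω : Type*} [MeasurableSpace Ω]
    {V : Type*} [NormedAddCommGroup V] [InnerProductSpace ℝ V] [CompleteSpace V]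
    (A : Ω → V →L[ℝ] V) (hA : StronglyMeasurable A)
    (γ Γ : ℝ) (hγ : 0 < γ)
    (hcoer : ∀ ω (v : V), γ * ‖v‖ ^ 2 ≤ ⟪A ω v, v⟫)
    (hbdd : ∀ ω, ‖A ω‖ ≤ Γ)
    (W : Submodule ℝ V) (hW : IsClosed (W : Set V)) (u : V) :
    ∃ Cu : Ω → V,
      StronglyMeasurable Cu ∧
      (∀ ω, Cu ω ∈ W) ∧
      (∀ ω, ∀ w ∈ W, ⟪A ω (Cu ω), w⟫ = ⟪A ω u, w⟫) ∧
      (∀ ω, ‖Cu ω‖ ≤ (Γ / γ) * ‖u‖) ∧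
      (∀ ω, ∀ c ∈ W, (∀ w ∈ W, ⟪A ω c, w⟫ = ⟪A ω u, w⟫) → c = Cu ω) := by
  have : CompleteSpace W := hW.completeSpace_coe
  have hunit : ∀ ω, IsUnit (W.compression (A ω)) := fun ω =>
    ContinuousLinearMap.isUnit_of_isCoercive_innerSL_comp
      (W.isCoercive_innerSL_comp_compression hγ (hcoer ω))
  have hsolves : ∀ ω, ∀ w ∈ W, ⟪A ω (W.corrector (A ω) u), w⟫ = ⟪A ω u, w⟫ :=
    fun ω _ hw => W.inner_apply_corrector (hunit ω) u hw
  refine ⟨fun ω => W.corrector (A ω) u,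
    hA.comp_of_continuousAt fun ω => W.continuousAt_corrector (hunit ω) u,
    fun ω => W.corrector_mem _ u, hsolves, fun ω => ?_, fun ω c hc hcsolves => ?_⟩
  · calc ‖W.corrector (A ω) u‖ ≤ ‖A ω‖ / γ * ‖u‖ :=
          W.norm_le_of_inner_apply_eq hγ (hcoer ω) (W.corrector_mem _ u) (hsolves ω)
      _ ≤ Γ / γ * ‖u‖ := by gcongr; exact hbdd ω
  · exact W.eq_of_inner_apply_eq hγ (hcoer ω) hc (W.corrector_mem _ u)
      fun w hw => (hcsolves w hw).trans (hsolves ω w hw).symm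

/-- Well-posedness and measurable dependence of the corrector problems: for a strongly
measurable family of uniformly bounded, uniformly coercive operators `A(ω)` and a closed
subspace `W`, there is a unique `C(ω)u ∈ W` with `⟪A(ω)C(ω)u, w⟫ = ⟪A(ω)u, w⟫` for all
`w ∈ W`; it satisfies `‖C(ω)u‖ ≤ (Γ/γ)‖u‖` and `ω ↦ C(ω)u` is strongly measurable. -/
theorem corrector_measurable_wellposed
    {Ω : Type*} [MeasurableSpace Ω]
    {V : Type*} [NormedAddCommGroup V] [InnerProductSpace ℝ V] [CompleteSpace V]
    (A : Ω → V →L[ℝ] V) (hA : StronglyMeasurable A)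
    (γ Γ : ℝ) (hγ : 0 < γ) (hγΓ : γ ≤ Γ)
    (hcoer : ∀ ω (v : V), γ * ‖v‖ ^ 2 ≤ ⟪A ω v, v⟫)
    (hbdd : ∀ ω, ‖A ω‖ ≤ Γ)
    (W : Submodule ℝ V) (hW : IsClosed (W : Set V)) (u : V) :
    ∃ Cu : Ω → V,
      StronglyMeasurable Cu ∧
      (∀ ω, Cu ω ∈ W) ∧
      (∀ ω, ∀ w ∈ W, ⟪A ω (Cu ω), w⟫ = ⟪A ω u, w⟫) ∧
      (∀ ω, ‖Cu ω‖ ≤ (Γ / γ) * ‖u‖) ∧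
      (∀ ω, ∀ c ∈ W, (∀ w ∈ W, ⟪A ω c, w⟫ = ⟪A ω u, w⟫) → c = Cu ω) :=
  corrector_measurable_wellposed_general A hA γ Γ hγ hcoer hbdd W hW u
end
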